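/- Let p ≥ 1, let a_{1k}, a_{2k}, a_{3k} ∈ ℝ, let l, m, q, U, V, W : ℝ → ℝ and f, g, h : ℝ → ℝ be C¹ functions with f(0) = g(0) = h(0) = 0, and define u(s,t) = f(Σ_{k=1}^p a_{1k} l(s)^k U(t)^k), v(s,t) = g(Σ_{k=1}^p a_{2k} m(s)^k V(t)^k), w(s,t) = h(Σ_{k=1}^p a_{3k} q(s)^k W(t)^k). Suppose U(t₀) = V(t₀) = W(t₀) = 0, θ(s) = θ₀ − ∫₀ˢ τ(σ) dσ, and there is λ : ℝ → ℝ with λ(s) ≠ 0 such that g'(0)·a_{21} m(s) V'(t₀) = λ(s) sinh θ(s) and h'(0)·a_{31} q(s) W'(t₀) = λ(s) cosh θ(s) for all s. Then P(s,t₀) = r(s) for all s and the surface normal satisfies n(s,t₀) = λ(s)·(cosh θ(s)·N(s) + sinh θ(s)·B(s)) for all s. -/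

import Mathlib

noncomputable section

/-- Lorentzian inner product on Minkowski 3-space `ℝ₁³`. -/
def minkDot (X Y : ℝ × ℝ × ℝ) : ℝ := X.1 * Y.1 + X.2.1 * Y.2.1 - X.2.2 * Y.2.2

/-- Lorentzian vector product on Minkowski 3-space `ℝ₁³`. -/
def lcross (X Y : ℝ × ℝ × ℝ) : ℝ × ℝ × ℝ :=
  (X.2.1 * Y.2.2 - X.2.2 * Y.2.1, X.2.2 * Y.1 - X.1 * Y.2.2, X.2.1 * Y.1 - X.1 * Y.2.1)

/-- Lorentzian norm `‖X‖ = √|⟨X,X⟩|`. -/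
def mnorm (X : ℝ × ℝ × ℝ) : ℝ := Real.sqrt |minkDot X X|


private lemma lcross_add_right (X Y Z : ℝ × ℝ × ℝ) :
    lcross X (Y + Z) = lcross X Y + lcross X Z := by
  simp only [lcross, Prod.mk_add_mk, Prod.fst_add, Prod.snd_add, Prod.ext_iff]
  refine ⟨by ring, by ring, by ring⟩

private lemma lcross_smul_right (a : ℝ) (X Y : ℝ × ℝ × ℝ) :
    lcross X (a • Y) = a • lcross X Y := by
  simp only [lcross, Prod.smul_mk, Prod.smul_fst, Prod.smul_snd, smul_eq_mul, Prod.ext_iff]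
  refine ⟨by ring, by ring, by ring⟩

private lemma lcross_self (X : ℝ × ℝ × ℝ) : lcross X X = 0 := by
  simp only [lcross, Prod.ext_iff, Prod.fst_zero, Prod.snd_zero]
  refine ⟨by ring, by ring, by ring⟩

private lemma lcross_antisym (X Y : ℝ × ℝ × ℝ) : lcross X Y = -lcross Y X := by
  simp only [lcross, Prod.neg_mk, Prod.ext_iff]
  refine ⟨by ring, by ring, by ring⟩

private lemma lcross_comb (Tv Nv Bv : ℝ × ℝ × ℝ)
    (h1 : lcross Tv Nv = Bv) (h2 : lcross Bv Tv = -Nv) (a b c : ℝ) :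
    lcross Tv (a • Tv + b • Nv + c • Bv) = c • Nv + b • Bv := by
  have hTB : lcross Tv Bv = Nv := by
    rw [lcross_antisym, h2, neg_neg]
  rw [lcross_add_right, lcross_add_right, lcross_smul_right, lcross_smul_right,
    lcross_smul_right, lcross_self, h1, hTB, smul_zero, zero_add, add_comm]

private lemma sum_pow_zero (p : ℕ) (c : ℕ → ℝ) :
    ∑ k ∈ Finset.Icc 1 p, c k * (0 : ℝ) ^ k = 0 := by
  refine Finset.sum_eq_zero fun k hk => ?_
  have hk1 : 1 ≤ k := (Finset.mem_Icc.mp hk).1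
  rw [zero_pow (by omega), mul_zero]

private lemma hasDerivAt_sum_pow (p : ℕ) (hp : 1 ≤ p) (c : ℕ → ℝ) (U : ℝ → ℝ)
    (t₀ U' : ℝ) (hU : HasDerivAt U U' t₀) (h0 : U t₀ = 0) :
    HasDerivAt (fun t => ∑ k ∈ Finset.Icc 1 p, c k * U t ^ k) (c 1 * U') t₀ := by
  have hsum := HasDerivAt.fun_sum
    (fun k (_ : k ∈ Finset.Icc 1 p) => (hU.pow k).const_mul (c k))
  have hval : ∑ k ∈ Finset.Icc 1 p, c k * ((k : ℝ) * U t₀ ^ (k - 1) * U') = c 1 * U' := by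
    rw [Finset.sum_eq_single 1]
    · simp
    · intro k hk hk1
      have hk2 : 2 ≤ k := by
        have := (Finset.mem_Icc.mp hk).1; omega
      rw [h0, zero_pow (by omega : k - 1 ≠ 0)]; ring
    · intro h1; exact absurd (Finset.mem_Icc.mpr ⟨le_rfl, hp⟩) h1
  rw [← hval]
  exact hsum

/-- Sufficient conditions in the composed form of the marching-scale functions. -/
theorem surface_pencil_composed_spacelike_timelikeNormal
    (r T N B : ℝ → ℝ × ℝ × ℝ) (κ τ : ℝ → ℝ)
    (hr : ContDiff ℝ (⊤ : ℕ∞) r) (hT : ContDiff ℝ (⊤ : ℕ∞) T) (hN : ContDiff ℝ (⊤ : ℕ∞) N)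
    (hB : ContDiff ℝ (⊤ : ℕ∞) B) (hκ : ContDiff ℝ (⊤ : ℕ∞) κ) (hτ : ContDiff ℝ (⊤ : ℕ∞) τ)
    (hrT : ∀ s, deriv r s = T s)
    (hT' : ∀ s, deriv T s = κ s • N s)
    (hN' : ∀ s, deriv N s = κ s • T s + τ s • B s)
    (hB' : ∀ s, deriv B s = τ s • N s)
    (hTT : ∀ s, minkDot (T s) (T s) = 1)
    (hNN : ∀ s, minkDot (N s) (N s) = -1)
    (hBB : ∀ s, minkDot (B s) (B s) = 1)
    (hTN : ∀ s, minkDot (T s) (N s) = 0)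
    (hTB : ∀ s, minkDot (T s) (B s) = 0)
    (hNB : ∀ s, minkDot (N s) (B s) = 0)
    (hTxN : ∀ s, lcross (T s) (N s) = B s)
    (hNxB : ∀ s, lcross (N s) (B s) = T s)
    (hBxT : ∀ s, lcross (B s) (T s) = -N s)
    (u v w : ℝ → ℝ → ℝ)
    (t₀ : ℝ) (P n : ℝ → ℝ → ℝ × ℝ × ℝ)
    (hP : ∀ s t, P s t = r s + u s t • T s + v s t • N s + w s t • B s)
    (hn : ∀ s t, n s t = lcross (deriv (fun σ => P σ t) s) (deriv (fun t' => P s t') t))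
    (p : ℕ) (hp : 1 ≤ p)
    (a1 a2 a3 : ℕ → ℝ)
    (l m q U V W f g h : ℝ → ℝ)
    (hl : ContDiff ℝ 1 l) (hm : ContDiff ℝ 1 m) (hq : ContDiff ℝ 1 q)
    (hU : ContDiff ℝ 1 U) (hV : ContDiff ℝ 1 V) (hW : ContDiff ℝ 1 W)
    (hf : ContDiff ℝ 1 f) (hg : ContDiff ℝ 1 g) (hh : ContDiff ℝ 1 h)
    (hf0 : f 0 = 0) (hg0 : g 0 = 0) (hh0 : h 0 = 0)
    (hu : ∀ s t, u s t = f (∑ k ∈ Finset.Icc 1 p, a1 k * l s ^ k * U t ^ k))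
    (hv : ∀ s t, v s t = g (∑ k ∈ Finset.Icc 1 p, a2 k * m s ^ k * V t ^ k))
    (hw : ∀ s t, w s t = h (∑ k ∈ Finset.Icc 1 p, a3 k * q s ^ k * W t ^ k))
    (hU0 : U t₀ = 0) (hV0 : V t₀ = 0) (hW0 : W t₀ = 0)
    (θ₀ : ℝ) (θ : ℝ → ℝ) (hθ : ∀ s, θ s = θ₀ - ∫ σ in (0:ℝ)..s, τ σ)
    (lam : ℝ → ℝ) (hlam : ∀ s, lam s ≠ 0)
    (hV' : ∀ s, deriv g 0 * (a2 1 * m s * deriv V t₀) = lam s * Real.sinh (θ s))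
    (hW' : ∀ s, deriv h 0 * (a3 1 * q s * deriv W t₀) = lam s * Real.cosh (θ s)) :
    ∀ s, P s t₀ = r s ∧
      n s t₀ = lam s • (Real.cosh (θ s) • N s + Real.sinh (θ s) • B s) := by
  intro s
  have hzero1 : (∑ k ∈ Finset.Icc 1 p, a1 k * l s ^ k * U t₀ ^ k) = 0 := by
    simp only [hU0]; exact sum_pow_zero p (fun k => a1 k * l s ^ k)
  have hzero2 : ∀ σ, (∑ k ∈ Finset.Icc 1 p, a2 k * m σ ^ k * V t₀ ^ k) = 0 := by
    intro σ; simp only [hV0]; exact sum_pow_zero p (fun k => a2 k * m σ ^ k)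
  have hzero3 : ∀ σ, (∑ k ∈ Finset.Icc 1 p, a3 k * q σ ^ k * W t₀ ^ k) = 0 := by
    intro σ; simp only [hW0]; exact sum_pow_zero p (fun k => a3 k * q σ ^ k)
  have hzero1' : ∀ σ, (∑ k ∈ Finset.Icc 1 p, a1 k * l σ ^ k * U t₀ ^ k) = 0 := by
    intro σ; simp only [hU0]; exact sum_pow_zero p (fun k => a1 k * l σ ^ k)
  have hP0 : ∀ σ, P σ t₀ = r σ := by
    intro σ
    rw [hP, hu, hv, hw, hzero1' σ, hzero2 σ, hzero3 σ, hf0, hg0, hh0]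
    simp
  refine ⟨hP0 s, ?_⟩
  -- s-derivative
  have hds : deriv (fun σ => P σ t₀) s = T s := by
    have heq : (fun σ => P σ t₀) = r := funext hP0
    rw [heq, hrT]
  -- t-derivative helpers
  have hDU : HasDerivAt U (deriv U t₀) t₀ := ((hU.differentiable one_ne_zero) t₀).hasDerivAt
  have hDV : HasDerivAt V (deriv V t₀) t₀ := ((hV.differentiable one_ne_zero) t₀).hasDerivAt
  have hDW : HasDerivAt W (deriv W t₀) t₀ := ((hW.differentiable one_ne_zero) t₀).hasDerivAt
  set uT : ℝ := deriv f 0 * (a1 1 * l s ^ 1 * deriv U t₀) with huT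
  set vT : ℝ := deriv g 0 * (a2 1 * m s ^ 1 * deriv V t₀) with hvT
  set wT : ℝ := deriv h 0 * (a3 1 * q s ^ 1 * deriv W t₀) with hwT
  have hDu : HasDerivAt (fun t => u s t) uT t₀ := by
    have hF := hasDerivAt_sum_pow p hp (fun k => a1 k * l s ^ k) U t₀ _ hDU hU0
    have hDf : HasDerivAt f (deriv f 0)
        (∑ k ∈ Finset.Icc 1 p, a1 k * l s ^ k * U t₀ ^ k) := by
      rw [hzero1]; exact ((hf.differentiable one_ne_zero) 0).hasDerivAt
    have := hDf.comp t₀ hF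
    have heq : (fun t => u s t)
        = fun t => f (∑ k ∈ Finset.Icc 1 p, a1 k * l s ^ k * U t ^ k) :=
      funext fun t => hu s t
    rw [heq]
    exact this
  have hDv : HasDerivAt (fun t => v s t) vT t₀ := by
    have hF := hasDerivAt_sum_pow p hp (fun k => a2 k * m s ^ k) V t₀ _ hDV hV0
    have hDg : HasDerivAt g (deriv g 0)
        (∑ k ∈ Finset.Icc 1 p, a2 k * m s ^ k * V t₀ ^ k) := by
      rw [hzero2 s]; exact ((hg.differentiable one_ne_zero) 0).hasDerivAt
    have := hDg.comp t₀ hF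
    have heq : (fun t => v s t)
        = fun t => g (∑ k ∈ Finset.Icc 1 p, a2 k * m s ^ k * V t ^ k) :=
      funext fun t => hv s t
    rw [heq]
    exact this
  have hDw : HasDerivAt (fun t => w s t) wT t₀ := by
    have hF := hasDerivAt_sum_pow p hp (fun k => a3 k * q s ^ k) W t₀ _ hDW hW0
    have hDh : HasDerivAt h (deriv h 0)
        (∑ k ∈ Finset.Icc 1 p, a3 k * q s ^ k * W t₀ ^ k) := by
      rw [hzero3 s]; exact ((hh.differentiable one_ne_zero) 0).hasDerivAt
    have := hDh.comp t₀ hF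
    have heq : (fun t => w s t)
        = fun t => h (∑ k ∈ Finset.Icc 1 p, a3 k * q s ^ k * W t ^ k) :=
      funext fun t => hw s t
    rw [heq]
    exact this
  have hDP : HasDerivAt (fun t => P s t) (uT • T s + vT • N s + wT • B s) t₀ := by
    have heq : (fun t => P s t)
        = fun t => r s + u s t • T s + v s t • N s + w s t • B s :=
      funext fun t => hP s t
    rw [heq]
    have h0 : HasDerivAt (fun _ : ℝ => r s) 0 t₀ := hasDerivAt_const t₀ (r s)
    have := ((h0.add (hDu.smul_const (T s))).add (hDv.smul_const (N s))).add
      (hDw.smul_const (B s))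
    rw [zero_add] at this; exact this
  have hdt : deriv (fun t' => P s t') t₀ = uT • T s + vT • N s + wT • B s := hDP.deriv
  -- wrap up
  have hvT' : vT = lam s * Real.sinh (θ s) := by
    rw [hvT, pow_one]; exact hV' s
  have hwT' : wT = lam s * Real.cosh (θ s) := by
    rw [hwT, pow_one]; exact hW' s
  rw [hn, hds, hdt, lcross_comb (T s) (N s) (B s) (hTxN s) (hBxT s) uT vT wT,
    hvT', hwT', smul_add, smul_smul, smul_smul]
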